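/- Let k be a field containing a primitive n-th root of unity ω, and let the cyclic group ℤ/n act on k[x,y] by x ↦ ωx, y ↦ ω^{-1}y. Then the invariant ring k[x,y]^{ℤ/n} is generated as a k-algebra by u = xⁿ, v = yⁿ, and z = xy, and is isomorphic to k[U,V,Z]/(UV − Zⁿ). -/

import Mathlib

open MvPolynomial

/-- The generator of the `ℤ/n`-action on `k[x,y]`: the `k`-algebra automorphism (here, an
algebra endomorphism) determined by `x ↦ ωx`, `y ↦ ω⁻¹y`. -/
noncomputable def cyclicGen (k : Type) [Field k] (ω : k) :
    MvPolynomial (Fin 2) k →ₐ[k] MvPolynomial (Fin 2) k :=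
  aeval ![C ω * X 0, C ω⁻¹ * X 1]

/-! The generator scales the monomial `x^a y^b` by `ω^(a-b)`, so a polynomial is invariant exactly
when each of its monomials has `a ≡ b [MOD n]`, and such a monomial is `(xy)^m (xⁿ)^i (yⁿ)^j`.
For the presentation, every polynomial in `U, V, Z` is congruent modulo `UV - Zⁿ` to one with no
monomial divisible by `UV`, and on those monomials `U^a V^b Z^c ↦ x^(na+c) y^(nb+c)` is injective;
hence the kernel of `U ↦ xⁿ, V ↦ yⁿ, Z ↦ xy` is exactly `(UV - Zⁿ)`. -/

theorem IsPrimitiveRoot.pow_eq_pow_iff_modEq {M : Type*} [CommMonoid M] {ζ : M} {n a b : ℕ}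
    (h : IsPrimitiveRoot ζ n) (hn : n ≠ 0) : ζ ^ a = ζ ^ b ↔ a ≡ b [MOD n] :=
  h.eq_orderOf ▸ (h.isOfFinOrder hn).pow_eq_pow_iff_modEq

theorem Nat.ModEq.exists_eq_add_mul {n a b : ℕ} (h : a ≡ b [MOD n]) :
    ∃ m i j, a = m + n * i ∧ b = m + n * j := by
  rcases le_total a b with hab | hba
  · obtain ⟨j, hj⟩ := (Nat.modEq_iff_dvd' hab).mp h
    exact ⟨a, 0, j, by simp, by omega⟩
  · obtain ⟨i, hi⟩ := (Nat.modEq_iff_dvd' hba).mp h.symm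
    exact ⟨b, i, 0, by omega, by simp⟩

theorem pow_mul_pow_mem_adjoin {R A : Type*} [CommSemiring R] [CommSemiring A] [Algebra R A]
    (x y : A) {n a b : ℕ} (h : a ≡ b [MOD n]) :
    x ^ a * y ^ b ∈ Algebra.adjoin R {x ^ n, y ^ n, x * y} := by
  obtain ⟨m, i, j, rfl, rfl⟩ := h.exists_eq_add_mul
  have hxy : x ^ (m + n * i) * y ^ (m + n * j) = (x * y) ^ m * (x ^ n) ^ i * (y ^ n) ^ j := by
    ring
  rw [hxy]
  refine mul_mem (mul_mem (pow_mem ?_ m) (pow_mem ?_ i)) (pow_mem ?_ j) <;>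
    exact Algebra.subset_adjoin (by simp)

section CyclicInvariants

variable {k : Type} [Field k]

theorem cyclicGen_monomial (ω : k) (d : Fin 2 →₀ ℕ) (c : k) :
    cyclicGen k ω (monomial d c) = monomial d (ω ^ d 0 * ω⁻¹ ^ d 1 * c) := by
  simp only [monomial_eq, Finsupp.prod_fintype _ _ (fun i => pow_zero _), Fin.prod_univ_two,
    map_mul, map_pow, cyclicGen, aeval_C, aeval_X, algebraMap_eq, Matrix.cons_val_zero,
    Matrix.cons_val_one, mul_pow]
  ring

theorem coeff_cyclicGen (ω : k) (p : MvPolynomial (Fin 2) k) (d : Fin 2 →₀ ℕ) :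
    coeff d (cyclicGen k ω p) = ω ^ d 0 * ω⁻¹ ^ d 1 * coeff d p := by
  induction p using MvPolynomial.induction_on' with
  | monomial d' c =>
    rw [cyclicGen_monomial, coeff_monomial, coeff_monomial]
    split_ifs with h
    · rw [h]
    · rw [mul_zero]
  | add p q hp hq => rw [map_add, coeff_add, coeff_add, hp, hq, mul_add]

theorem modEq_of_mem_support_of_cyclicGen_eq_self {n : ℕ} (hn : n ≠ 0) {ω : k}
    (hω : IsPrimitiveRoot ω n) {p : MvPolynomial (Fin 2) k} (hp : cyclicGen k ω p = p)
    {d : Fin 2 →₀ ℕ} (hd : d ∈ p.support) : d 0 ≡ d 1 [MOD n] := by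
  have hω0 : ω ≠ 0 := hω.ne_zero hn
  have hweight : ω ^ d 0 * ω⁻¹ ^ d 1 = 1 := by
    have := coeff_cyclicGen ω p d
    rw [hp] at this
    exact (mul_eq_right₀ (mem_support_iff.mp hd)).mp this.symm
  rw [← hω.pow_eq_pow_iff_modEq hn]
  rwa [inv_pow, mul_inv_eq_one₀ (pow_ne_zero _ hω0)] at hweight

theorem equalizer_cyclicGen_le_adjoin {n : ℕ} (hn : n ≠ 0) {ω : k}
    (hω : IsPrimitiveRoot ω n) :
    AlgHom.equalizer (cyclicGen k ω) (AlgHom.id k _) ≤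
      Algebra.adjoin k {(X 0 ^ n : MvPolynomial (Fin 2) k), X 1 ^ n, X 0 * X 1} := by
  intro p hp
  rw [p.as_sum]
  refine Subalgebra.sum_mem _ fun d hd => ?_
  rw [monomial_eq, Finsupp.prod_fintype _ _ (fun i => pow_zero _), Fin.prod_univ_two]
  exact mul_mem (Subalgebra.algebraMap_mem _ _) <| pow_mul_pow_mem_adjoin _ _ <|
    modEq_of_mem_support_of_cyclicGen_eq_self hn hω hp hd

theorem adjoin_le_equalizer_cyclicGen {n : ℕ} (hn : n ≠ 0) {ω : k}
    (hω : IsPrimitiveRoot ω n) :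
    Algebra.adjoin k {(X 0 ^ n : MvPolynomial (Fin 2) k), X 1 ^ n, X 0 * X 1} ≤
      AlgHom.equalizer (cyclicGen k ω) (AlgHom.id k _) := by
  have hx : cyclicGen k ω (X 0) = C ω * X 0 := aeval_X _ _
  have hy : cyclicGen k ω (X 1) = C ω⁻¹ * X 1 := aeval_X _ _
  rw [Algebra.adjoin_le_iff]
  rintro q (rfl | rfl | rfl) <;> rw [SetLike.mem_coe, AlgHom.mem_equalizer, AlgHom.id_apply]
  · rw [map_pow, hx, mul_pow, ← map_pow, hω.pow_eq_one, map_one, one_mul]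
  · rw [map_pow, hy, mul_pow, ← map_pow, inv_pow, hω.pow_eq_one, inv_one, map_one, one_mul]
  · rw [map_mul, hx, hy, mul_mul_mul_comm, ← C_mul, mul_inv_cancel₀ (hω.ne_zero hn), C_1,
      one_mul]

theorem equalizer_cyclicGen_eq_adjoin {n : ℕ} (hn : n ≠ 0) {ω : k}
    (hω : IsPrimitiveRoot ω n) :
    AlgHom.equalizer (cyclicGen k ω) (AlgHom.id k _) =
      Algebra.adjoin k {(X 0 ^ n : MvPolynomial (Fin 2) k), X 1 ^ n, X 0 * X 1} :=
  (equalizer_cyclicGen_le_adjoin hn hω).antisymm (adjoin_le_equalizer_cyclicGen hn hω)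

end CyclicInvariants

section Presentation

variable (R : Type*) [CommRing R] (n : ℕ)

noncomputable def uvzHom : MvPolynomial (Fin 3) R →ₐ[R] MvPolynomial (Fin 2) R :=
  aeval ![X 0 ^ n, X 1 ^ n, X 0 * X 1]

theorem range_uvzHom :
    (uvzHom R n).range =
      Algebra.adjoin R {(X 0 ^ n : MvPolynomial (Fin 2) R), X 1 ^ n, X 0 * X 1} := by
  rw [uvzHom, ← Algebra.adjoin_range_eq_range_aeval, Matrix.range_cons, Matrix.range_cons,
    Matrix.range_cons_empty, Set.singleton_union, Set.singleton_union]

noncomputable def uvzExponent (d : Fin 3 →₀ ℕ) : Fin 2 →₀ ℕ :=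
  Finsupp.single 0 (n * d 0 + d 2) + Finsupp.single 1 (n * d 1 + d 2)

variable {n}

@[simp] theorem uvzExponent_apply_zero (d : Fin 3 →₀ ℕ) :
    uvzExponent n d 0 = n * d 0 + d 2 := by
  simp [uvzExponent]

@[simp] theorem uvzExponent_apply_one (d : Fin 3 →₀ ℕ) :
    uvzExponent n d 1 = n * d 1 + d 2 := by
  simp [uvzExponent]

variable {R}

theorem monomial_fin_three_eq (d : Fin 3 →₀ ℕ) (c : R) :
    monomial d c = C c * X 0 ^ d 0 * X 1 ^ d 1 * X 2 ^ d 2 := by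
  rw [monomial_eq, Finsupp.prod_fintype _ _ (fun i => pow_zero _), Fin.prod_univ_three]
  ring

theorem uvzHom_monomial (d : Fin 3 →₀ ℕ) (c : R) :
    uvzHom R n (monomial d c) = monomial (uvzExponent n d) c := by
  rw [monomial_fin_three_eq, monomial_eq, Finsupp.prod_fintype _ _ (fun i => pow_zero _),
    Fin.prod_univ_two]
  simp only [uvzExponent_apply_zero, uvzExponent_apply_one, map_mul, map_pow, uvzHom, aeval_C,
    aeval_X, algebraMap_eq, Matrix.cons_val_zero, Matrix.cons_val_one, Matrix.cons_val_two,
    Matrix.tail_cons, Matrix.head_cons, mul_pow]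
  ring

theorem uvzExponent_injOn (hn : n ≠ 0) :
    Set.InjOn (uvzExponent n) {d | d 0 = 0 ∨ d 1 = 0} := by
  intro d hd d' hd' h
  have h0 := congrArg (· 0) h
  have h1 := congrArg (· 1) h
  simp only [uvzExponent_apply_zero, uvzExponent_apply_one] at h0 h1
  have hdiff : (n : ℤ) * (d 0 - d 1) = n * (d' 0 - d' 1) := by linarith
  have hdiff' := mul_left_cancel₀ (Int.natCast_ne_zero.mpr hn) hdiff
  have e0 : d 0 = d' 0 := by rcases hd with hd | hd <;> rcases hd' with hd' | hd' <;> omega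
  have e1 : d 1 = d' 1 := by omega
  rw [e0] at h0
  ext i
  fin_cases i
  exacts [e0, e1, by simpa using h0]

theorem exists_sub_mem_span_and_reduced (p : MvPolynomial (Fin 3) R) :
    ∃ r : MvPolynomial (Fin 3) R,
      p - r ∈ Ideal.span {(X 0 * X 1 - X 2 ^ n : MvPolynomial (Fin 3) R)} ∧
      ∀ d ∈ r.support, d 0 = 0 ∨ d 1 = 0 := by
  induction p using MvPolynomial.induction_on' with
  | monomial d c =>
    -- trade `m = min a b` factors `UV` of `U^a V^b Z^c` for `Z^(nm)`
    set m := min (d 0) (d 1)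
    set d' : Fin 3 →₀ ℕ :=
      Finsupp.single 0 (d 0 - m) + Finsupp.single 1 (d 1 - m) + Finsupp.single 2 (d 2 + n * m)
    have hd' : d' 0 = d 0 - m ∧ d' 1 = d 1 - m ∧ d' 2 = d 2 + n * m := by simp [d']
    refine ⟨monomial d' c, Ideal.mem_span_singleton.mpr ?_, fun e he => ?_⟩
    · have hd0 : d 0 = (d 0 - m) + m := (Nat.sub_add_cancel (min_le_left _ _)).symm
      have hd1 : d 1 = (d 1 - m) + m := (Nat.sub_add_cancel (min_le_right _ _)).symm
      have hdiff : monomial d c - monomial d' c =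
          C c * X 0 ^ (d 0 - m) * X 1 ^ (d 1 - m) * X 2 ^ d 2 *
            ((X 0 * X 1) ^ m - (X 2 ^ n) ^ m) := by
        rw [monomial_fin_three_eq, monomial_fin_three_eq, hd'.1, hd'.2.1, hd'.2.2]
        nth_rewrite 1 [hd0, hd1]
        ring
      rw [hdiff]
      exact (sub_dvd_pow_sub_pow _ _ m).mul_left _
    · rw [Finset.mem_singleton.mp (support_monomial_subset he), hd'.1, hd'.2.1]
      omega
  | add p q hp hq =>
    obtain ⟨r, hpr, hr⟩ := hp
    obtain ⟨s, hqs, hs⟩ := hq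
    refine ⟨r + s, by simpa only [add_sub_add_comm] using add_mem hpr hqs, fun d hd => ?_⟩
    rcases Finset.mem_union.mp (support_add hd) with hd | hd
    exacts [hr d hd, hs d hd]

theorem eq_zero_of_uvzHom_eq_zero (hn : n ≠ 0) {r : MvPolynomial (Fin 3) R}
    (hr : ∀ d ∈ r.support, d 0 = 0 ∨ d 1 = 0) (h : uvzHom R n r = 0) : r = 0 := by
  by_contra hr0
  obtain ⟨d, hd⟩ := exists_coeff_ne_zero hr0
  have hds : d ∈ r.support := mem_support_iff.mpr hd
  have hcoeff : coeff (uvzExponent n d) (uvzHom R n r) = coeff d r := by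
    nth_rewrite 1 [r.as_sum]
    rw [map_sum, coeff_sum, Finset.sum_eq_single d]
    · rw [uvzHom_monomial, coeff_monomial, if_pos rfl]
    · intro d' hd' hne
      rw [uvzHom_monomial, coeff_monomial,
        if_neg fun hE => hne (uvzExponent_injOn hn (hr d' hd') (hr d hds) hE)]
    · exact fun h => absurd hds h
  rw [h, coeff_zero] at hcoeff
  exact hd hcoeff.symm

theorem ker_uvzHom (hn : n ≠ 0) :
    RingHom.ker (uvzHom R n) = Ideal.span {(X 0 * X 1 - X 2 ^ n : MvPolynomial (Fin 3) R)} := by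
  have hle : Ideal.span {(X 0 * X 1 - X 2 ^ n : MvPolynomial (Fin 3) R)} ≤
      RingHom.ker (uvzHom R n) := by
    rw [Ideal.span_le, Set.singleton_subset_iff, SetLike.mem_coe, RingHom.mem_ker]
    simp [uvzHom, mul_pow]
  refine le_antisymm (fun p hp => ?_) hle
  obtain ⟨r, hpr, hr⟩ := exists_sub_mem_span_and_reduced p
  have hr0 : uvzHom R n r = 0 := by
    simpa [RingHom.mem_ker.mp hp] using RingHom.mem_ker.mp (hle hpr)
  simpa [eq_zero_of_uvzHom_eq_zero hn hr hr0] using hpr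

variable (R) in
noncomputable def uvzEquiv (hn : n ≠ 0) :
    (MvPolynomial (Fin 3) R ⧸ Ideal.span {(X 0 * X 1 - X 2 ^ n : MvPolynomial (Fin 3) R)}) ≃ₐ[R]
      Algebra.adjoin R {(X 0 ^ n : MvPolynomial (Fin 2) R), X 1 ^ n, X 0 * X 1} :=
  (Ideal.quotientEquivAlgOfEq R
      ((AlgHom.ker_rangeRestrict _).trans (ker_uvzHom hn)).symm).trans <|
    (Ideal.quotientKerAlgEquivOfSurjective (uvzHom R n).rangeRestrict_surjective).trans <|
      Subalgebra.equivOfEq _ _ (range_uvzHom R n)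

theorem uvzEquiv_mk (hn : n ≠ 0) (p : MvPolynomial (Fin 3) R) :
    (uvzEquiv R hn (Ideal.Quotient.mk _ p) : MvPolynomial (Fin 2) R) = uvzHom R n p :=
  rfl

end Presentation

/-- Let `k` be a field containing a primitive `n`-th root of unity `ω`, and let `ℤ/n` act on
`k[x,y]` by `x ↦ ωx`, `y ↦ ω⁻¹y`.  Then the invariant ring `k[x,y]^{ℤ/n}` (the subalgebra
fixed by the generator of the action) is generated as a `k`-algebra by `u = xⁿ`, `v = yⁿ` and
`z = xy`, and is isomorphic to `k[U,V,Z]/(UV − Zⁿ)` via `U ↦ xⁿ`, `V ↦ yⁿ`, `Z ↦ xy`. -/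
theorem stmt13 (k : Type) [Field k] (n : ℕ) (hn : 0 < n) (ω : k)
    (hω : IsPrimitiveRoot ω n) :
    AlgHom.equalizer (cyclicGen k ω) (AlgHom.id k (MvPolynomial (Fin 2) k)) =
      Algebra.adjoin k {(X 0 ^ n : MvPolynomial (Fin 2) k), X 1 ^ n, X 0 * X 1} ∧
    ∃ e : (MvPolynomial (Fin 3) k ⧸
            Ideal.span {(X 0 * X 1 - X 2 ^ n : MvPolynomial (Fin 3) k)}) ≃ₐ[k]
          (AlgHom.equalizer (cyclicGen k ω) (AlgHom.id k (MvPolynomial (Fin 2) k))),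
      ((e (Ideal.Quotient.mk _ (X 0)) : MvPolynomial (Fin 2) k) = X 0 ^ n) ∧
      ((e (Ideal.Quotient.mk _ (X 1)) : MvPolynomial (Fin 2) k) = X 1 ^ n) ∧
      ((e (Ideal.Quotient.mk _ (X 2)) : MvPolynomial (Fin 2) k) = X 0 * X 1) := by
  have hinv := equalizer_cyclicGen_eq_adjoin hn.ne' hω
  refine ⟨hinv, (uvzEquiv k hn.ne').trans (Subalgebra.equivOfEq _ _ hinv.symm), ?_, ?_, ?_⟩ <;>
    simp [uvzEquiv_mk, uvzHom]
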